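/- arXiv:1212.5063 — 4 statements merged into one kernel-verified Lean document; each statement's English description precedes it below -/
import Mathlib

section
/- For positive integers a < b with gcd(a,b) = 1, the maximum size of a subset of {1,2,...,n} containing no pair (x,y) with bx = ay equals (b/(b+1))n + O(log n). -/
/-!
Write `v(x)` for the exponent of the largest power of `b` dividing `x`. Since `gcd(a, b) = 1`,
`v(b x) = v(x) + 1` while `v(a y) = v(y)`, so the set `E(n)` of `x ∈ [n]` with `v(x)` even
is `(b/a)`-multiple-free. It is also optimal: for every `m ∈ E(n/b)` the pair `{a m, b m}`
meets the complement of a multiple-free `A ⊆ [n]`, and choosing such a point injectively gives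
`|A| + |E(n/b)| ≤ n = |E(n)| + |E(n/b)|`. Finally `|E(n)| = n - |E(⌊n/b⌋)|` shows that the
error `|E(n)| - b n/(b+1)` changes by at most `1` per base-`b` digit of `n`.
-/

open Finset

lemma padicValNat_mul_of_coprime {a b : ℕ} (hb : b ≠ 1) (hco : Nat.Coprime a b) (m : ℕ) :
    padicValNat b (a * m) = padicValNat b m := by
  rcases eq_or_ne m 0 with rfl | hm
  · simp
  have ha : a ≠ 0 := by
    rintro rfl
    exact hb ((Nat.coprime_zero_left b).mp hco)
  refine eq_of_forall_le_iff fun k => ?_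
  rw [← Nat.pow_dvd_iff_le_padicValNat hb (mul_ne_zero ha hm),
    ← Nat.pow_dvd_iff_le_padicValNat hb hm]
  exact ⟨(Nat.Coprime.pow_left k hco.symm).dvd_of_dvd_mul_left, fun h => h.mul_left a⟩

/-- The set `E(n)`; `padicValNat b` is the exponent of `b` for any base `b`, prime or not. -/
def evenValSet (b n : ℕ) : Finset ℕ := {x ∈ Icc 1 n | Even (padicValNat b x)}

section

variable {a b : ℕ}

lemma mul_ne_mul_of_mem_evenValSet (hb : 1 < b) (hco : Nat.Coprime a b) {x y n m : ℕ}
    (hx : x ∈ evenValSet b n) (hy : y ∈ evenValSet b m) : b * x ≠ a * y := by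
  simp only [evenValSet, mem_filter, mem_Icc] at hx hy
  intro h
  have hv := congrArg (padicValNat b) h
  rw [padicValNat_base_mul hb (by omega), padicValNat_mul_of_coprime hb.ne' hco] at hv
  exact Nat.not_even_iff_odd.mpr hx.2.add_one (hv ▸ hy.2)

lemma card_evenValSet_add_card_evenValSet_div (hb : 1 < b) (n : ℕ) :
    #(evenValSet b n) + #(evenValSet b (n / b)) = n := by
  have hodd : #(evenValSet b (n / b)) = #{x ∈ Icc 1 n | ¬Even (padicValNat b x)} := by
    refine card_bij (fun m _ => b * m) (fun m hm => ?_)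
      (fun _ _ _ _ h => Nat.eq_of_mul_eq_mul_left (by omega) h) (fun x hx => ?_)
    · simp only [evenValSet, mem_filter, mem_Icc] at hm ⊢
      have hbm : m * b ≤ n := Nat.mul_le_of_le_div b m n hm.1.2
      refine ⟨⟨by nlinarith, by linarith⟩, ?_⟩
      rw [padicValNat_base_mul hb (by omega), Nat.even_add_one]
      exact not_not.mpr hm.2
    · simp only [mem_filter, mem_Icc] at hx
      have hv : padicValNat b x ≠ 0 := fun h => hx.2 (h ▸ Even.zero)
      obtain ⟨m, rfl⟩ : b ∣ x := by
        simpa [padicValNat.eq_zero_iff, hb.ne', show x ≠ 0 by omega] using hv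
      have hm : m ≠ 0 := by rintro rfl; omega
      rw [padicValNat_base_mul hb hm, Nat.even_add_one, not_not] at hx
      refine ⟨m, ?_, rfl⟩
      simp only [evenValSet, mem_filter, mem_Icc]
      exact ⟨⟨by omega, (Nat.le_div_iff_mul_le (by omega)).mpr (by linarith)⟩, hx.2⟩
  rw [hodd, evenValSet, card_filter_add_card_filter_not, Nat.card_Icc, Nat.add_sub_cancel]

lemma card_add_card_evenValSet_div_le (ha : 0 < a) (hab : a < b) (hco : Nat.Coprime a b)
    {n : ℕ} {A : Finset ℕ} (hA : A ⊆ Icc 1 n) (hfree : ∀ x ∈ A, ∀ y ∈ A, b * x ≠ a * y) :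
    #A + #(evenValSet b (n / b)) ≤ n := by
  classical
  have hb : 1 < b := by omega
  let f : ℕ → ℕ := fun m => if a * m ∈ A then b * m else a * m
  have hinj : Set.InjOn f (evenValSet b (n / b)) := by
    intro m hm m' hm' h
    simp only [f] at h
    split_ifs at h
    · exact Nat.eq_of_mul_eq_mul_left (by omega) h
    · exact (mul_ne_mul_of_mem_evenValSet hb hco hm hm' h).elim
    · exact (mul_ne_mul_of_mem_evenValSet hb hco hm' hm h.symm).elim
    · exact Nat.eq_of_mul_eq_mul_left ha h
  have hmaps : Set.MapsTo f (evenValSet b (n / b)) ↑(Icc 1 n \ A) := by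
    intro m hm
    rw [mem_coe, evenValSet, mem_filter, mem_Icc] at hm
    have hbm : b * m ≤ n := by rw [mul_comm]; exact Nat.mul_le_of_le_div b m n hm.1.2
    simp only [f, mem_coe, mem_sdiff, mem_Icc]
    split_ifs with h
    · exact ⟨⟨Nat.mul_pos hb.pos hm.1.1, hbm⟩, fun hbA => hfree _ h _ hbA (mul_left_comm b a m)⟩
    · exact ⟨⟨Nat.mul_pos ha hm.1.1, (Nat.mul_le_mul_right m hab.le).trans hbm⟩, h⟩
  have hle := card_le_card_of_injOn f hmaps hinj
  have hAn := card_le_card hA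
  rw [card_sdiff_of_subset hA, Nat.card_Icc] at hle
  rw [Nat.card_Icc] at hAn
  omega

lemma abs_card_evenValSet_sub_le (hb : 1 < b) {k n : ℕ} (hn : n < b ^ k) :
    |(#(evenValSet b n) : ℝ) - b / (b + 1) * n| ≤ k := by
  induction k generalizing n with
  | zero =>
    obtain rfl : n = 0 := by simpa using hn
    simp [evenValSet]
  | succ k ih =>
    have hq : n / b < b ^ k := Nat.div_lt_of_lt_mul (by rwa [← pow_succ'])
    have hrec : (#(evenValSet b n) : ℝ) = n - #(evenValSet b (n / b)) := by
      rw [eq_sub_iff_add_eq]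
      exact_mod_cast card_evenValSet_add_card_evenValSet_div hb n
    have hdiv : (n : ℝ) = b * (n / b : ℕ) + (n % b : ℕ) := by
      exact_mod_cast (Nat.div_add_mod n b).symm
    have hmod : ((n % b : ℕ) : ℝ) < b := by exact_mod_cast Nat.mod_lt n (by omega)
    have hb1 : (0 : ℝ) < b + 1 := by positivity
    have hstep : (#(evenValSet b n) : ℝ) - b / (b + 1) * n = (n % b : ℕ) / (b + 1) -
        ((#(evenValSet b (n / b)) : ℝ) - b / (b + 1) * (n / b : ℕ)) := by
      rw [hrec]
      field_simp
      rw [hdiv]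
      ring
    have hr : |((n % b : ℕ) : ℝ) / (b + 1)| ≤ 1 := by
      rw [abs_of_nonneg (by positivity), div_le_one hb1]
      linarith
    rw [hstep, Nat.cast_succ, add_comm (k : ℝ)]
    exact (abs_sub _ _).trans (add_le_add hr (ih hq))

lemma abs_card_evenValSet_sub_le_log (hb : 1 < b) {n : ℕ} (hn : 2 ≤ n) :
    |(#(evenValSet b n) : ℝ) - b / (b + 1) * n| ≤ 2 / Real.log 2 * Real.log n := by
  have hlog2 : 0 < Real.log 2 := Real.log_pos one_lt_two
  have hdigits : n < b ^ (Nat.log 2 n + 1) :=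
    (Nat.lt_pow_succ_log_self one_lt_two n).trans_le (Nat.pow_le_pow_left hb _)
  have hlog : (Nat.log 2 n : ℝ) ≤ Real.log n / Real.log 2 := by
    simpa [Real.log_div_log] using Real.natLog_le_logb n 2
  have hone : 1 ≤ Real.log n / Real.log 2 := by
    rw [one_le_div hlog2]
    exact Real.log_le_log two_pos (by exact_mod_cast hn)
  calc |(#(evenValSet b n) : ℝ) - b / (b + 1) * n|
      ≤ (Nat.log 2 n + 1 : ℕ) := abs_card_evenValSet_sub_le hb hdigits
    _ ≤ 2 * (Real.log n / Real.log 2) := by push_cast; linarith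
    _ = 2 / Real.log 2 * Real.log n := by ring

end

/-- For positive integers `a < b` with `gcd(a,b) = 1`, the maximum size of a subset of
`{1,...,n}` containing no pair `(x,y)` with `b*x = a*y` (i.e. `(b/a)x = y`) equals
`(b/(b+1))·n + O(log n)`. -/
theorem stmt0 (a b : ℕ) (ha : 0 < a) (hab : a < b) (hco : Nat.Coprime a b) :
    ∃ C : ℝ, 0 < C ∧ ∀ n : ℕ, 2 ≤ n →
      (∃ A ⊆ Finset.Icc 1 n, (∀ x ∈ A, ∀ y ∈ A, b * x ≠ a * y) ∧
        ((b : ℝ) / (b + 1)) * n - C * Real.log n ≤ A.card) ∧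
      (∀ A ⊆ Finset.Icc 1 n, (∀ x ∈ A, ∀ y ∈ A, b * x ≠ a * y) →
        (A.card : ℝ) ≤ ((b : ℝ) / (b + 1)) * n + C * Real.log n) := by
  have hb : 1 < b := by omega
  refine ⟨2 / Real.log 2, div_pos two_pos (Real.log_pos one_lt_two), fun n hn => ?_⟩
  have hE := abs_le.mp (abs_card_evenValSet_sub_le_log hb hn)
  refine ⟨⟨evenValSet b n, filter_subset _ _,
    fun x hx y hy => mul_ne_mul_of_mem_evenValSet hb hco hx hy, by linarith⟩,
    fun A hA hfree => ?_⟩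
  have hA : #A ≤ #(evenValSet b n) := by
    have := card_add_card_evenValSet_div_le ha hab hco hA hfree
    have := card_evenValSet_add_card_evenValSet_div hb n
    omega
  have : (#A : ℝ) ≤ #(evenValSet b n) := by exact_mod_cast hA
  linarith
end

section
/- With notation as in the random model, for 1 ≤ j ≤ (log_b n)/2, the expected number of (2j-1)-th subpowers of b in [n]_p lying at even distance from the smallest vertex of their component in D[[n]_p] equals ((b-1)/(b(1+p)))·p·n·(1/b^{2j-1} − (p/b)^{2j-1}·p) up to an additive error of at most 1. -/
open MeasureTheory Finset
open scoped Classical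

/-- The Bernoulli(p) measure on `Bool`. -/
noncomputable def bern (p : ℝ) : Measure Bool :=
  ENNReal.ofReal p • Measure.dirac true + ENNReal.ofReal (1 - p) • Measure.dirac false

/-- The law of the random subset `[n]_p`, as the product of `n` Bernoulli(p) measures. -/
noncomputable def randMeasure (n : ℕ) (p : ℝ) : Measure (Fin n → Bool) :=
  Measure.pi fun _ => bern p

/-- The realization of the random subset `[n]_p ⊆ {1,...,n}` from a sample `ω`. -/
noncomputable def randSet (n : ℕ) (ω : Fin n → Bool) : Finset ℕ :=
  (Finset.univ.filter fun i : Fin n => ω i = true).image fun i => (i : ℕ) + 1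

/-- `k` is an `i`-th subpower of `b` if `k = b^i · l` with `b ∤ l`. -/
def isSubpower (b i k : ℕ) : Prop := ∃ l : ℕ, k = b ^ i * l ∧ ¬ b ∣ l

/-- `v` lies in `S` at even distance from the smallest vertex of its component in the
subgraph of `D` induced on `S`, where `D` has arcs `(x,y)` with `b*x = a*y`:
there is a directed path `c 0 → ⋯ → c k = v` of even length inside `S` such that
`c 0` has no in-neighbour inside `S`. -/
def evenDist (a b : ℕ) (S : Finset ℕ) (v : ℕ) : Prop :=
  ∃ (k : ℕ) (c : Fin (k + 1) → ℕ), Even k ∧ c (Fin.last k) = v ∧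
    (∀ i, c i ∈ S) ∧
    (∀ i : Fin k, b * c i.castSucc = a * c i.succ) ∧
    ∀ u : ℕ, b * u = a * c 0 → u ∉ S

/-- `|T*_i|`: the number of `i`-th subpowers of `b` in `S = [n]_p` lying at even
distance from the smallest vertex of their component in `D[S]`. -/
noncomputable def TstarCard (a b n i : ℕ) (S : Finset ℕ) : ℕ :=
  ((Finset.Icc 1 n).filter fun v => isSubpower b i v ∧ evenDist a b S v).card

/-!
A subpower `v = b^i l` (`b ∤ l`) has at most one in-neighbour in `D`, and following in-neighbours
backwards from `v` traces the chain `x_t = b^(i-t) a^t l`, `t ≤ i`, which cannot be extended past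
`t = i` because `b ∤ a^(i+1) l`. Hence for odd `i = 2j-1`, `v` is at even distance from the source
of its component in `D[[n]_p]` iff the first `t` with `x_t ∉ [n]_p` is odd and at most `i`. The
`x_t` are distinct, so this has probability `∑_{t<j} p^(2t+1) (1-p) = p (1-p^(2j)) / (1+p)`, the
same for every subpower. There are `⌊n/b^i⌋ - ⌊n/b^(i+1)⌋` subpowers of order `i` in `[n]`, so
linearity of expectation gives the expected value exactly, and removing the floors costs at most
`1`.
-/

instance (p : ℝ) : IsFiniteMeasure (bern p) := by
  unfold bern; constructor; simp

instance (n : ℕ) (p : ℝ) : IsFiniteMeasure (randMeasure n p) := by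
  unfold randMeasure; infer_instance

lemma bern_real_apply {p : ℝ} (hp0 : 0 ≤ p) (hp1 : p ≤ 1) (s : Set Bool) :
    (bern p).real s = (if true ∈ s then p else 0) + (if false ∈ s then 1 - p else 0) := by
  simp only [measureReal_def, bern, Measure.add_apply, Measure.smul_apply, smul_eq_mul,
    Measure.dirac_apply' _ (Set.to_countable s).measurableSet, Set.indicator_apply]
  rw [ENNReal.toReal_add (by split_ifs <;> simp) (by split_ifs <;> simp)]
  split_ifs <;> simp [hp0, hp1]

lemma succ_mem_randSet_iff {n : ℕ} (ω : Fin n → Bool) (i : Fin n) :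
    (i : ℕ) + 1 ∈ randSet n ω ↔ ω i = true := by
  simp [randSet, Fin.val_inj]

lemma exists_succ_eq_of_mem_Icc {n v : ℕ} (hv : v ∈ Icc 1 n) : ∃ i : Fin n, (i : ℕ) + 1 = v :=
  ⟨⟨v - 1, by grind⟩, by grind⟩

lemma measureReal_randMeasure_cylinder {n : ℕ} {p : ℝ} (hp0 : 0 ≤ p) (hp1 : p ≤ 1)
    {A B : Finset ℕ} (hA : A ⊆ Icc 1 n) (hB : B ⊆ Icc 1 n) (hAB : Disjoint A B) :
    (randMeasure n p).real {ω | (∀ v ∈ A, v ∈ randSet n ω) ∧ ∀ v ∈ B, v ∉ randSet n ω}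
      = p ^ #A * (1 - p) ^ #B := by
  set f : Fin n → ℕ := fun i => i + 1
  set s : Fin n → Set Bool := fun i =>
    if f i ∈ A then {true} else if f i ∈ B then {false} else Set.univ
  have hcyl : {ω : Fin n → Bool | (∀ v ∈ A, v ∈ randSet n ω) ∧ ∀ v ∈ B, v ∉ randSet n ω}
      = Set.pi Set.univ s := by
    ext ω
    simp only [Set.mem_ofPred_eq, Set.mem_pi, Set.mem_univ, forall_const, s]
    constructor
    · rintro ⟨hωA, hωB⟩ i
      split_ifs with hiA hiB
      · exact (succ_mem_randSet_iff ω i).mp (hωA _ hiA)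
      · simpa [f, succ_mem_randSet_iff] using hωB _ hiB
      · trivial
    · intro h
      constructor <;> intro v hv
      · obtain ⟨i, rfl⟩ := exists_succ_eq_of_mem_Icc (hA hv)
        simpa [hv, f, succ_mem_randSet_iff] using h i
      · obtain ⟨i, rfl⟩ := exists_succ_eq_of_mem_Icc (hB hv)
        simpa [hv, disjoint_right.mp hAB hv, f, succ_mem_randSet_iff] using h i
  have hcard : ∀ C ⊆ Icc 1 n, #{i | f i ∈ C} = #C := fun C hC =>
    card_nbij f (fun i hi => by simpa using hi) (fun i _ j _ h => by simpa [f, Fin.val_inj] using h)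
      (fun v hv => by
        obtain ⟨i, rfl⟩ := exists_succ_eq_of_mem_Icc (hC hv)
        exact ⟨i, by simpa using hv, rfl⟩)
  rw [hcyl, measureReal_def, randMeasure, Measure.pi_pi, ENNReal.toReal_prod]
  have hfactor : ∀ i, (bern p).real (s i) = if f i ∈ A then p else if f i ∈ B then 1 - p else 1 :=
    fun i => by rw [bern_real_apply hp0 hp1]; simp only [s]; split_ifs <;> simp_all
  have hBA : ∀ i, f i ∈ B → f i ∉ A := fun i hi => disjoint_right.mp hAB hi
  simp_rw [← measureReal_def, hfactor, prod_ite, prod_const_one, prod_const, mul_one, filter_filter]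
  rw [hcard A hA, ← hcard B hB]
  congr 3
  ext i
  simp only [mem_filter, mem_univ, true_and, and_iff_right_iff_imp]
  exact hBA i

lemma measureReal_randMeasure_prefix_gap {n : ℕ} {p : ℝ} (hp0 : 0 ≤ p) (hp1 : p ≤ 1)
    {x : ℕ → ℕ} {m : ℕ} (hx : ∀ t ≤ m, x t ∈ Icc 1 n) (hinj : Set.InjOn x (Set.Iic m)) :
    (randMeasure n p).real {ω | (∀ t < m, x t ∈ randSet n ω) ∧ x m ∉ randSet n ω}
      = p ^ m * (1 - p) := by
  have hcard : #((range m).image x) = m := by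
    rw [card_image_of_injOn (hinj.mono fun t ht => by simp at ht ⊢; omega), card_range]
  have hdisj : Disjoint ((range m).image x) {x m} := by
    simp only [disjoint_singleton_right, mem_image, mem_range, not_exists, not_and]
    exact fun t ht h => ht.ne (hinj (by simp; omega) (by simp) h)
  have hA : (range m).image x ⊆ Icc 1 n := by
    simp only [subset_iff, mem_image, mem_range]
    rintro _ ⟨t, ht, rfl⟩
    exact hx t ht.le
  have h := measureReal_randMeasure_cylinder hp0 hp1 hA (by simpa using hx m le_rfl) hdisj
  rw [hcard, card_singleton, pow_one] at h
  rw [← h]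
  congr 1
  ext ω
  simp

def chain (a b i l t : ℕ) : ℕ := b ^ (i - t) * a ^ t * l

section Chain

variable {a b i l : ℕ}

lemma chain_zero : chain a b i l 0 = b ^ i * l := by simp [chain]

lemma mul_chain_succ {t : ℕ} (ht : t < i) : b * chain a b i l (t + 1) = a * chain a b i l t := by
  rw [chain, chain, show i - t = i - (t + 1) + 1 by omega]
  ring

lemma lt_and_eq_chain_succ_of_mul_eq (hco : Nat.Coprime a b) (hb : 0 < b) (hl : ¬ b ∣ l)
    {t u : ℕ} (h : b * u = a * chain a b i l t) : t < i ∧ u = chain a b i l (t + 1) := by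
  have hti : t < i := by
    by_contra! hit
    refine hl ((Nat.Coprime.pow_right (t + 1) hco.symm).dvd_of_dvd_mul_left ⟨u, ?_⟩)
    rw [chain, Nat.sub_eq_zero_of_le hit] at h
    rw [h]; ring
  exact ⟨hti, Nat.eq_of_mul_eq_mul_left hb (h.trans (mul_chain_succ hti).symm)⟩

lemma chain_pos (ha : 0 < a) (hb : 0 < b) (hl : 0 < l) (t : ℕ) : 0 < chain a b i l t := by
  unfold chain; positivity

lemma chain_le (hab : a ≤ b) {t : ℕ} (ht : t ≤ i) : chain a b i l t ≤ b ^ i * l := by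
  calc chain a b i l t ≤ b ^ (i - t) * b ^ t * l := by unfold chain; gcongr
    _ = b ^ i * l := by rw [← pow_add, Nat.sub_add_cancel ht]

lemma strictAntiOn_chain (ha : 0 < a) (hab : a < b) (hl : 0 < l) :
    StrictAntiOn (chain a b i l) (Set.Iic i) :=
  strictAntiOn_Iic_of_succ_lt fun t ht => Nat.lt_of_mul_lt_mul_left (a := b) <| by
    rw [Order.succ_eq_add_one, mul_chain_succ ht]
    exact Nat.mul_lt_mul_of_pos_right hab (chain_pos ha (ha.trans hab) hl t)

lemma eq_chain_of_isPath (hco : Nat.Coprime a b) (hb : 0 < b) (hl : ¬ b ∣ l) {k : ℕ}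
    {c : Fin (k + 1) → ℕ} (hlast : c (Fin.last k) = b ^ i * l)
    (harc : ∀ m : Fin k, b * c m.castSucc = a * c m.succ) (m : Fin (k + 1)) :
    k - m ≤ i ∧ c m = chain a b i l (k - m) := by
  induction m using Fin.reverseInduction with
  | last => simp [hlast, chain_zero]
  | cast m ih =>
    obtain ⟨hlt, heq⟩ := lt_and_eq_chain_succ_of_mul_eq hco hb hl ((harc m).trans (by rw [ih.2]))
    have hm : k - m.castSucc = k - m.succ + 1 := by simp; omega
    exact ⟨by omega, by rw [hm, heq]⟩

lemma evenDist_pow_mul_iff (hco : Nat.Coprime a b) (hb : 0 < b) (hl : ¬ b ∣ l) (hi : Odd i)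
    (S : Finset ℕ) :
    evenDist a b S (b ^ i * l) ↔
      ∃ k, Even k ∧ k < i ∧ (∀ t ≤ k, chain a b i l t ∈ S) ∧ chain a b i l (k + 1) ∉ S := by
  constructor
  · rintro ⟨k, c, hk, hlast, hmem, harc, hsource⟩
    have hc := eq_chain_of_isPath hco hb hl hlast harc
    have hki : k < i := lt_of_le_of_ne (by simpa using (hc 0).1)
      (by rintro rfl; exact Nat.not_odd_iff_even.mpr hk hi)
    refine ⟨k, hk, hki, fun t ht => ?_, hsource _ ?_⟩
    · simpa [(hc ⟨k - t, by omega⟩).2, Nat.sub_sub_self ht] using hmem ⟨k - t, by omega⟩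
    · simpa [(hc 0).2] using mul_chain_succ hki
  · rintro ⟨k, hk, hki, hmem, hgap⟩
    refine ⟨k, fun m => chain a b i l (k - m), hk, by simp [chain_zero], fun m => hmem _ (by omega),
      fun m => ?_, fun u hu => ?_⟩
    · simpa [show k - m = k - (m + 1) + 1 by omega] using mul_chain_succ (by omega)
    · simpa [(lt_and_eq_chain_succ_of_mul_eq hco hb hl hu).2] using hgap

end Chain

lemma measureReal_evenDist {a b n j l : ℕ} (ha : 0 < a) (hab : a < b) (hco : Nat.Coprime a b)
    {p : ℝ} (hp0 : 0 ≤ p) (hp1 : p ≤ 1) (hj : 1 ≤ j) (hl : ¬ b ∣ l)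
    (hv : b ^ (2 * j - 1) * l ≤ n) :
    (randMeasure n p).real {ω | evenDist a b (randSet n ω) (b ^ (2 * j - 1) * l)}
      = ∑ t ∈ range j, p ^ (2 * t + 1) * (1 - p) := by
  set x := chain a b (2 * j - 1) l
  have hb : 0 < b := ha.trans hab
  have hl0 : 0 < l := Nat.pos_of_ne_zero fun h => hl (h ▸ dvd_zero b)
  have hodd : Odd (2 * j - 1) := ⟨j - 1, by omega⟩
  set E : ℕ → Set (Fin n → Bool) :=
    fun m => {ω | (∀ t < m, x t ∈ randSet n ω) ∧ x m ∉ randSet n ω}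
  have hevent : {ω | evenDist a b (randSet n ω) (b ^ (2 * j - 1) * l)}
      = ⋃ t ∈ range j, E (2 * t + 1) := by
    ext ω
    simp only [Set.mem_ofPred_eq, Set.mem_iUnion, mem_range, exists_prop, E,
      evenDist_pow_mul_iff hco hb hl hodd]
    constructor
    · rintro ⟨_, ⟨t, rfl⟩, hti, hmem, hgap⟩
      exact ⟨t, by omega, fun s hs => hmem s (by omega), by rwa [two_mul]⟩
    · rintro ⟨t, htj, hmem, hgap⟩
      exact ⟨2 * t, even_two_mul t, by omega, fun s hs => hmem s (by omega), hgap⟩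
  have hdisj : ∀ m m', m < m' → Disjoint (E m) (E m') := fun m m' hm =>
    Set.disjoint_left.mpr fun ω hω hω' => hω.2 (hω'.1 m hm)
  have hpairwise : (range j : Set ℕ).PairwiseDisjoint fun t => E (2 * t + 1) := by
    intro t _ t' _ htt'
    rcases htt'.lt_or_gt with h | h
    · exact hdisj _ _ (by omega)
    · exact (hdisj _ _ (by omega)).symm
  rw [hevent, measureReal_biUnion_finset hpairwise fun _ _ => (Set.to_countable _).measurableSet]
  refine sum_congr rfl fun t ht => measureReal_randMeasure_prefix_gap hp0 hp1 (fun s hs => ?_) ?_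
  · have := chain_pos ha hb hl0 (i := 2 * j - 1) s
    have := chain_le hab.le (i := 2 * j - 1) (l := l) (t := s) (by simp at ht; omega)
    simp only [mem_Icc, x]; omega
  · exact (strictAntiOn_chain ha hab hl0).injOn.mono (Set.Iic_subset_Iic.mpr (by simp at ht; omega))

lemma integral_card_filter {Ω ι : Type*} [MeasurableSpace Ω] (μ : Measure Ω) [IsFiniteMeasure μ]
    (s : Finset ι) (P : Ω → ι → Prop) (hP : ∀ v ∈ s, MeasurableSet {ω | P ω v}) :
    ∫ ω, (#{v ∈ s | P ω v} : ℝ) ∂μ = ∑ v ∈ s, μ.real {ω | P ω v} := by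
  simp_rw [card_filter, Nat.cast_sum, Nat.cast_ite, Nat.cast_one, Nat.cast_zero]
  rw [integral_finsetSum]
  · refine sum_congr rfl fun v hv => ?_
    rw [← integral_indicator_one (hP v hv)]
    rfl
  · exact fun v hv => (integrable_const 1).indicator (hP v hv)

lemma isSubpower_iff {b i v : ℕ} (hb : 0 < b) :
    isSubpower b i v ↔ b ^ i ∣ v ∧ ¬ b ^ (i + 1) ∣ v := by
  have hbi : 0 < b ^ i := pow_pos hb i
  constructor
  · rintro ⟨l, rfl, hl⟩
    exact ⟨dvd_mul_right _ _, by rwa [pow_succ, Nat.mul_dvd_mul_iff_left hbi]⟩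
  · rintro ⟨⟨l, rfl⟩, hl⟩
    exact ⟨l, rfl, by rwa [pow_succ, Nat.mul_dvd_mul_iff_left hbi] at hl⟩

lemma card_filter_isSubpower {b : ℕ} (hb : 0 < b) (i n : ℕ) :
    #{v ∈ Icc 1 n | isSubpower b i v} = n / b ^ i - n / b ^ (i + 1) := by
  have hIcc : Icc 1 n = Ioc 0 n := rfl
  simp_rw [isSubpower_iff hb, ← filter_filter, filter_not, hIcc]
  rw [card_sdiff_of_subset (filter_subset _ _), filter_filter]
  have hdvd : ∀ v, b ^ i ∣ v ∧ b ^ (i + 1) ∣ v ↔ b ^ (i + 1) ∣ v := fun v =>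
    and_iff_right_of_imp (dvd_trans (pow_dvd_pow b (Nat.le_succ i)))
  simp_rw [hdvd, Nat.Ioc_filter_dvd_card_eq_div]

lemma abs_natFloor_sub_natFloor_sub_le {K : Type*} [Field K] [LinearOrder K] [IsStrictOrderedRing K]
    [FloorSemiring K] {x y : K} (hx : 0 ≤ x) (hy : 0 ≤ y) :
    |((⌊x⌋₊ : K) - ⌊y⌋₊) - (x - y)| ≤ 1 := by
  have := Nat.floor_le hx
  have := Nat.floor_le hy
  have := Nat.lt_floor_add_one x
  have := Nat.lt_floor_add_one y
  rw [abs_le]; constructor <;> linarith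

lemma one_add_mul_sum_range_odd_pow (p : ℝ) (j : ℕ) :
    (1 + p) * ∑ t ∈ range j, p ^ (2 * t + 1) * (1 - p) = p - p ^ (2 * j + 1) := by
  induction j with
  | zero => simp
  | succ j ih => rw [sum_range_succ, mul_add, ih]; ring

lemma integral_TstarCard {a b n j : ℕ} (ha : 0 < a) (hab : a < b) (hco : Nat.Coprime a b)
    {p : ℝ} (hp0 : 0 ≤ p) (hp1 : p ≤ 1) (hj : 1 ≤ j) :
    ∫ ω, (TstarCard a b n (2 * j - 1) (randSet n ω) : ℝ) ∂ randMeasure n p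
      = ((n / b ^ (2 * j - 1) - n / b ^ (2 * j) : ℕ) : ℝ)
          * ∑ t ∈ range j, p ^ (2 * t + 1) * (1 - p) := by
  have hb : 0 < b := ha.trans hab
  simp_rw [TstarCard, ← filter_filter]
  rw [integral_card_filter _ _ _ fun _ _ => (Set.to_countable _).measurableSet,
    sum_congr rfl fun v hv => ?_, sum_const, nsmul_eq_mul, card_filter_isSubpower hb,
    show 2 * j - 1 + 1 = 2 * j by omega]
  obtain ⟨hv, l, rfl, hl⟩ := mem_filter.mp hv
  exact measureReal_evenDist ha hab hco hp0 hp1 hj hl (mem_Icc.mp hv).2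

lemma sub_one_div_mul_sub_pow_eq_sum_mul {b p n : ℝ} (hb : b ≠ 0) (hp : 1 + p ≠ 0) {j : ℕ}
    (hj : 1 ≤ j) :
    (b - 1) / (b * (1 + p)) * p * n * (1 / b ^ (2 * j - 1) - (p / b) ^ (2 * j - 1) * p)
      = (∑ t ∈ range j, p ^ (2 * t + 1) * (1 - p)) * (n / b ^ (2 * j - 1) - n / b ^ (2 * j)) := by
  have hq := one_add_mul_sum_range_odd_pow p j
  obtain ⟨i, hi⟩ : ∃ i, 2 * j = i + 1 := ⟨2 * j - 1, by omega⟩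
  rw [show 2 * j + 1 = i + 2 by omega] at hq
  rw [show 2 * j - 1 = i by omega, hi, eq_div_of_mul_eq hp ((mul_comm _ _).trans hq), div_pow]
  field_simp
  ring

theorem stmt6_general (a b : ℕ) (ha : 0 < a) (hab : a < b) (hco : Nat.Coprime a b)
    (p : ℝ) (hp0 : 0 < p) (hp1 : p < 1) (n j : ℕ) (hj1 : 1 ≤ j) :
    |(∫ ω, (TstarCard a b n (2 * j - 1) (randSet n ω) : ℝ) ∂ randMeasure n p)
      - ((b - 1 : ℝ) / (b * (1 + p))) * p * n
          * (1 / (b : ℝ) ^ (2 * j - 1) - (p / b) ^ (2 * j - 1) * p)| ≤ 1 := by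
  have hb : 0 < b := ha.trans hab
  set q := ∑ t ∈ range j, p ^ (2 * t + 1) * (1 - p)
  have hq : (1 + p) * q = p - p ^ (2 * j + 1) := one_add_mul_sum_range_odd_pow p j
  have hq0 : 0 ≤ q := sum_nonneg fun t _ => mul_nonneg (by positivity) (by linarith)
  have hq1 : q ≤ 1 := by nlinarith [pow_pos hp0 (2 * j + 1)]
  have hfloor : ∀ k, ((n / b ^ k : ℕ) : ℝ) = ⌊(n : ℝ) / (b : ℝ) ^ k⌋₊ := fun k => by
    rw [← Nat.cast_pow, Nat.floor_div_eq_div]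
  rw [integral_TstarCard ha hab hco hp0.le hp1.le hj1,
    sub_one_div_mul_sub_pow_eq_sum_mul (by positivity) (by positivity) hj1,
    Nat.cast_sub (Nat.div_le_div_left (Nat.pow_le_pow_right hb (by omega)) (pow_pos hb _)),
    hfloor, hfloor, mul_comm, ← mul_sub, abs_mul, abs_of_nonneg hq0]
  exact mul_le_one₀ hq1 (abs_nonneg _)
    (abs_natFloor_sub_natFloor_sub_le (by positivity) (by positivity))

/-- For `1 ≤ j ≤ (log_b n)/2`, the expected number of `(2j-1)`-th subpowers of `b` in
`[n]_p` lying at even distance from the smallest vertex of their component in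
`D[[n]_p]` equals `((b-1)/(b(1+p)))·p·n·(1/b^{2j-1} − (p/b)^{2j-1}·p)` up to an
additive error of at most 1. -/
theorem stmt6 (a b : ℕ) (ha : 0 < a) (hab : a < b) (hco : Nat.Coprime a b)
    (p : ℝ) (hp0 : 0 < p) (hp1 : p < 1) (n j : ℕ) (hn : 0 < n) (hj1 : 1 ≤ j)
    (hj : (b : ℝ) ^ (2 * j) ≤ n) :
    |(∫ ω, (TstarCard a b n (2 * j - 1) (randSet n ω) : ℝ) ∂ randMeasure n p)
      - ((b - 1 : ℝ) / (b * (1 + p))) * p * n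
          * (1 / (b : ℝ) ^ (2 * j - 1) - (p / b) ^ (2 * j - 1) * p)| ≤ 1 :=
  stmt6_general a b ha hab hco p hp0 hp1 n j hj1
end

section
/- With high probability (probability tending to 1 as n → ∞), the maximum size of a (b/a)-multiple-free subset of the random set [n]_p equals (b/(b+p))·p·n + O(√(pn)·log n·log log n). -/
/-!
Join `x` to `y` when `b * x = a * y`. By coprimality every `y` has at most one such `x`, its
parent `a * (y / b)`, so inside `S` the components are chains, and a largest `(b/a)`-multiple-free
subset takes every second element of each chain starting from its bottom: `maxMulFree a b S` is
the number of `v ∈ S` whose chain of ancestors in `S` has odd length (`oddRunSet`).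

For `S = [n]_p` this is a sum of indicators `Y_v`. The mean `q_v` of `Y_v` obeys
`q_v = p (1 - q_{parent})`, and `∑_{v ≤ n} q_v` equals `b p n / (b + p)` up to `p / (1 - p)`.
`Y_v` only depends on the ancestors of `v`, so `Y_u` and `Y_v` are independent unless their chains
meet, which happens for at most `(log₂ n + 1)²` values of `v`. Hence the variance is
`O(n log² n)`, and Chebyshev's inequality gives the concentration.
-/

open MeasureTheory Finset
open scoped Classical

/-- The maximum size of a `(b/a)`-multiple-free subset of `S`. -/
noncomputable def maxMulFree (a b : ℕ) (S : Finset ℕ) : ℕ :=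
  (S.powerset.filter fun A => ∀ x ∈ A, ∀ y ∈ A, b * x ≠ a * y).sup Finset.card

open Filter Topology ProbabilityTheory

lemma sum_Icc_filter_dvd {M : Type*} [AddCommMonoid M] (f : ℕ → M) {b : ℕ} (hb : 0 < b)
    (m : ℕ) : ∑ v ∈ Icc 1 m with b ∣ v, f v = ∑ k ∈ Icc 1 (m / b), f (b * k) := by
  have hmul : {v ∈ Icc 1 m | b ∣ v} = (Icc 1 (m / b)).image (b * ·) := by
    ext v
    simp only [Finset.mem_filter, Finset.mem_Icc, Finset.mem_image, Nat.le_div_iff_mul_le hb]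
    constructor
    · rintro ⟨⟨h1, h2⟩, k, rfl⟩
      exact ⟨k, ⟨Nat.pos_of_mul_pos_left h1, by rwa [mul_comm]⟩, rfl⟩
    · rintro ⟨k, ⟨h1, h2⟩, rfl⟩
      exact ⟨⟨Nat.mul_pos hb h1, by rwa [mul_comm]⟩, dvd_mul_right b k⟩
  rw [hmul, Finset.sum_image fun x _ y _ h => Nat.eq_of_mul_eq_mul_left hb h]

lemma natLog_two_add_one_le {n : ℕ} (hn : 1 ≤ Real.log n) :
    (Nat.log 2 n : ℝ) + 1 ≤ 3 * Real.log n := by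
  have hlog2 : (1 / 2 : ℝ) < Real.log 2 := by linarith [Real.log_two_gt_d9]
  have h1 : (Nat.log 2 n : ℝ) ≤ Real.log n / Real.log 2 := by
    simpa [Real.logb] using Real.natLog_le_logb n 2
  have h2 : Real.log n / Real.log 2 ≤ 2 * Real.log n := by
    rw [div_le_iff₀ (by linarith)]
    nlinarith
  linarith

lemma tendsto_sqrt_mul_log_mul_log_log {p : ℝ} (hp : 0 < p) :
    Tendsto (fun n : ℕ => √(p * n) * Real.log n * Real.log (Real.log n)) atTop atTop := by
  have hn := tendsto_natCast_atTop_atTop (R := ℝ)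
  have hlog := Real.tendsto_log_atTop.comp hn
  exact ((Real.tendsto_sqrt_atTop.comp (hn.const_mul_atTop hp)).atTop_mul_atTop₀
    hlog).atTop_mul_atTop₀ (Real.tendsto_log_atTop.comp hlog)

theorem DependsOn.indepFun_pi {ι : Type*} [Fintype ι] {Ω : ι → Type*}
    [∀ i, MeasurableSpace (Ω i)] [∀ i, DiscreteMeasurableSpace (Ω i)] [∀ i, Finite (Ω i)]
    {μ : ∀ i, Measure (Ω i)} [∀ i, IsProbabilityMeasure (μ i)]
    {β γ : Type*} [MeasurableSpace β] [MeasurableSpace γ] [Nonempty β] [Nonempty γ]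
    {f : (Π i, Ω i) → β} {g : (Π i, Ω i) → γ} {s t : Finset ι}
    (hf : DependsOn f s) (hg : DependsOn g t) (hst : Disjoint s t) :
    IndepFun f g (Measure.pi μ) := by
  obtain ⟨F, rfl⟩ := dependsOn_iff_exists_comp.mp hf
  obtain ⟨G, rfl⟩ := dependsOn_iff_exists_comp.mp hg
  have h := (iIndepFun_pi (μ := μ) (X := fun _ => id) fun _ => aemeasurable_id).indepFun_finset
    s t hst fun _ => measurable_pi_apply _
  exact h.comp .of_discrete .of_discrete

/-- Chebyshev's inequality at distance `T n / 2` from the mean, which is within `D ≤ T n / 2`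
of `m n`. -/
theorem tendsto_measure_abs_sub_le_of_variance {Ω : ℕ → Type*} [∀ n, MeasurableSpace (Ω n)]
    {μ : ∀ n, Measure (Ω n)} [∀ n, IsProbabilityMeasure (μ n)] {X : ∀ n, Ω n → ℝ}
    (hX : ∀ n, MemLp (X n) 2 (μ n)) {m T : ℕ → ℝ} {D : ℝ}
    (hmean : ∀ n, |(μ n)[X n] - m n| ≤ D) (hT : Tendsto T atTop atTop)
    (hvar : Tendsto (fun n => Var[X n; μ n] / T n ^ 2) atTop (𝓝 0)) :
    Tendsto (fun n => μ n {ω | |X n ω - m n| ≤ T n}) atTop (𝓝 1) := by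
  have hlower : Tendsto (fun n => 1 - ENNReal.ofReal (4 * (Var[X n; μ n] / T n ^ 2)))
      atTop (𝓝 1) := by
    have := ENNReal.Tendsto.sub tendsto_const_nhds
      (ENNReal.tendsto_ofReal (by simpa using hvar.const_mul 4)) (Or.inl ENNReal.one_ne_top)
    rwa [ENNReal.ofReal_zero, tsub_zero] at this
  refine tendsto_of_tendsto_of_tendsto_of_le_of_le' hlower tendsto_const_nhds ?_
    (Eventually.of_forall fun n => prob_le_one)
  filter_upwards [hT.eventually_ge_atTop (2 * D), hT.eventually_gt_atTop 0] with n hDT hT0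
  set G := {ω | |X n ω - m n| ≤ T n}
  have hGc : Gᶜ ⊆ {ω | T n / 2 ≤ |X n ω - (μ n)[X n]|} := fun ω hω => by
    simp only [G, Set.mem_compl_iff, Set.mem_ofPred_eq, not_le] at hω ⊢
    have := abs_sub_abs_le_abs_sub (X n ω - m n) ((μ n)[X n] - m n)
    rw [sub_sub_sub_cancel_right] at this
    linarith [hmean n]
  have hcheb := (measure_mono hGc).trans (meas_ge_le_variance_div_sq (hX n) (half_pos hT0))
  calc 1 - ENNReal.ofReal (4 * (Var[X n; μ n] / T n ^ 2)) ≤ 1 - μ n Gᶜ := by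
        refine tsub_le_tsub_left (hcheb.trans_eq ?_) 1
        congr 1
        field_simp
        ring
    _ ≤ μ n G := by
        rw [tsub_le_iff_right, ← measure_univ (μ := μ n), ← Set.union_compl_self G]
        exact measure_union_le _ _

/-- The conjunct `a * (v / b) < v` only serves termination: it holds when `a < b`, `0 < v`. -/
def runLen (a b : ℕ) (S : Finset ℕ) (v : ℕ) : ℕ :=
  if h : b ∣ v ∧ a * (v / b) < v ∧ a * (v / b) ∈ S then runLen a b S (a * (v / b)) + 1
  else 1
termination_by v
decreasing_by exact h.2.1

def oddRunSet (a b : ℕ) (S : Finset ℕ) : Finset ℕ :=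
  S.filter fun v => Odd (runLen a b S v)

lemma oddRunSet_subset (a b : ℕ) (S : Finset ℕ) : oddRunSet a b S ⊆ S :=
  Finset.filter_subset _ _

section Chains

variable {a b : ℕ}

lemma parent_lt (hab : a < b) {v : ℕ} (hv : 0 < v) (hd : b ∣ v) : a * (v / b) < v := by
  obtain ⟨k, rfl⟩ := hd
  rw [Nat.mul_div_cancel_left k (by omega)]
  exact Nat.mul_lt_mul_of_pos_right hab (Nat.pos_of_mul_pos_left hv)

lemma parent_pos (ha : 0 < a) {v : ℕ} (hv : 0 < v) (hd : b ∣ v) : 0 < a * (v / b) :=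
  Nat.mul_pos ha (Nat.div_pos (Nat.le_of_dvd hv hd) (Nat.pos_of_dvd_of_pos hd hv))

lemma mul_parent {y : ℕ} (hy : b ∣ y) : b * (a * (y / b)) = a * y := by
  rw [mul_left_comm, Nat.mul_div_cancel' hy]

lemma mul_eq_mul_iff_parent (hco : a.Coprime b) (hb : 0 < b) {x y : ℕ} :
    b * x = a * y ↔ b ∣ y ∧ a * (y / b) = x := by
  constructor
  · intro h
    have hy : b ∣ y := hco.symm.dvd_of_dvd_mul_left ⟨x, h.symm⟩
    exact ⟨hy, Nat.eq_of_mul_eq_mul_left hb (by rw [h, mul_parent hy])⟩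
  · rintro ⟨hy, rfl⟩
    exact mul_parent hy

lemma runLen_of_parent_mem (hab : a < b) {S : Finset ℕ} {v : ℕ} (hv : 0 < v) (hd : b ∣ v)
    (hS : a * (v / b) ∈ S) : runLen a b S v = runLen a b S (a * (v / b)) + 1 := by
  rw [runLen, dif_pos ⟨hd, parent_lt hab hv hd, hS⟩]

lemma runLen_of_parent_not_mem {S : Finset ℕ} {v : ℕ} (h : ¬ (b ∣ v ∧ a * (v / b) ∈ S)) :
    runLen a b S v = 1 := by
  rw [runLen, dif_neg (by tauto)]

lemma mem_oddRunSet_iff (hab : a < b) {S : Finset ℕ} {v : ℕ} (hv : 0 < v) :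
    v ∈ oddRunSet a b S ↔ v ∈ S ∧ ¬ (b ∣ v ∧ a * (v / b) ∈ oddRunSet a b S) := by
  by_cases h : b ∣ v ∧ a * (v / b) ∈ S
  · simp [oddRunSet, runLen_of_parent_mem hab hv h.1 h.2, Nat.odd_add_one, h]
  · simp only [oddRunSet, Finset.mem_filter, runLen_of_parent_not_mem h, odd_one, and_true]
    tauto

lemma oddRunSet_mulFree (hab : a < b) (hco : a.Coprime b) {S : Finset ℕ}
    (hS : ∀ v ∈ S, 0 < v) :
    ∀ x ∈ oddRunSet a b S, ∀ y ∈ oddRunSet a b S, b * x ≠ a * y := by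
  intro x hx y hy hxy
  obtain ⟨hd, rfl⟩ := (mul_eq_mul_iff_parent hco (by omega)).mp hxy
  exact ((mem_oddRunSet_iff hab (hS y (oddRunSet_subset a b S hy))).mp hy).2 ⟨hd, hx⟩

/-- Each element of a multiple-free `A ⊆ S` outside `oddRunSet a b S` is sent to its parent,
which lies in `oddRunSet a b S`; this map is injective. -/
lemma card_le_card_oddRunSet (hab : a < b) {S A : Finset ℕ} (hS : ∀ v ∈ S, 0 < v)
    (hAS : A ⊆ S) (hA : ∀ x ∈ A, ∀ y ∈ A, b * x ≠ a * y) :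
    #A ≤ #(oddRunSet a b S) := by
  have hparent (v) (hv : v ∈ A) (hodd : v ∉ oddRunSet a b S) :
      b ∣ v ∧ a * (v / b) ∈ oddRunSet a b S :=
    by_contra fun h => hodd ((mem_oddRunSet_iff hab (hS v (hAS hv))).mpr ⟨hAS hv, h⟩)
  have hb : 0 < b := by omega
  refine Finset.card_le_card_of_injOn (fun v => if v ∈ oddRunSet a b S then v else a * (v / b))
    (fun v hv => ?_) (fun u hu v hv huv => ?_)
  · dsimp only
    split_ifs with h
    exacts [h, (hparent v hv h).2]
  · simp only [Finset.mem_coe] at hu hv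
    dsimp only at huv
    split_ifs at huv with h₁ h₂ h₂
    · exact huv
    · exact absurd (huv ▸ mul_parent (hparent v hv h₂).1) (hA u hu v hv)
    · exact absurd (huv ▸ mul_parent (hparent u hu h₁).1) (hA v hv u hu)
    · obtain ⟨hdu, hpu⟩ := hparent u hu h₁
      obtain ⟨hdv, -⟩ := hparent v hv h₂
      have ha : 0 < a := Nat.pos_of_mul_pos_right (hS _ (oddRunSet_subset a b S hpu))
      rw [← Nat.mul_div_cancel' hdu, ← Nat.mul_div_cancel' hdv,
        Nat.eq_of_mul_eq_mul_left ha huv]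

theorem maxMulFree_eq_card_oddRunSet (hab : a < b) (hco : a.Coprime b) {S : Finset ℕ}
    (hS : ∀ v ∈ S, 0 < v) : maxMulFree a b S = #(oddRunSet a b S) := by
  refine le_antisymm (Finset.sup_le fun A hA => ?_) (Finset.le_sup ?_)
  · simp only [Finset.mem_filter, Finset.mem_powerset] at hA
    exact card_le_card_oddRunSet hab hS hA.1 hA.2
  · simp only [Finset.mem_filter, Finset.mem_powerset]
    exact ⟨Finset.filter_subset _ _, oddRunSet_mulFree hab hco hS⟩

end Chains

def ancestors (a b v : ℕ) : Set ℕ :=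
  {w | ∃ j, w * b ^ j = v * a ^ j}

noncomputable def ancestorCoords (a b n v : ℕ) : Finset (Fin n) :=
  Finset.univ.filter fun i => (i : ℕ) + 1 ∈ ancestors a b v

section Ancestors

variable {a b : ℕ}

lemma self_mem_ancestors (v : ℕ) : v ∈ ancestors a b v := ⟨0, by simp⟩

lemma ancestors_parent_subset {v : ℕ} (hd : b ∣ v) :
    ancestors a b (a * (v / b)) ⊆ ancestors a b v := by
  rintro w ⟨j, hj⟩
  refine ⟨j + 1, ?_⟩
  calc w * b ^ (j + 1) = b * (a * (v / b)) * a ^ j := by rw [pow_succ, ← mul_assoc, hj]; ring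
    _ = v * a ^ (j + 1) := by rw [mul_parent hd]; ring

lemma le_of_mem_ancestors (hab : a < b) {v w : ℕ} (hw : w ∈ ancestors a b v) : w ≤ v := by
  obtain ⟨j, hj⟩ := hw
  refine Nat.le_of_mul_le_mul_right ?_ (pow_pos (show 0 < b by omega) j)
  rw [hj]
  exact Nat.mul_le_mul_left v (Nat.pow_le_pow_left hab.le j)

lemma le_natLog_two_of_mul_pow_eq (ha : 0 < a) (hab : a < b) (hco : a.Coprime b) {n v w j : ℕ}
    (hv : 0 < v) (hvn : v ≤ n) (hj : w * b ^ j = v * a ^ j) : j ≤ Nat.log 2 n := by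
  have hdvd : b ^ j ∣ v :=
    (Nat.Coprime.pow j j hco).symm.dvd_of_dvd_mul_right ⟨w, by rw [← hj, mul_comm]⟩
  refine Nat.le_log_of_pow_le one_lt_two ?_
  calc 2 ^ j ≤ b ^ j := Nat.pow_le_pow_left (by omega) j
    _ ≤ n := (Nat.le_of_dvd hv hdvd).trans hvn

lemma runLen_congr {S T : Finset ℕ} {v : ℕ}
    (h : ∀ w ∈ ancestors a b v, w ∈ S ↔ w ∈ T) :
    runLen a b S v = runLen a b T v := by
  induction v using Nat.strong_induction_on with
  | _ v ih =>
    conv_lhs => rw [runLen]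
    conv_rhs => rw [runLen]
    by_cases hd : b ∣ v ∧ a * (v / b) < v
    · have hsub := ancestors_parent_subset (a := a) hd.1
      simp only [hd, true_and, h _ (hsub (self_mem_ancestors _)),
        ih _ hd.2 fun w hw => h w (hsub hw)]
    · rw [dif_neg (by tauto), dif_neg (by tauto)]

lemma mem_oddRunSet_congr {S T : Finset ℕ} {v : ℕ}
    (h : ∀ w ∈ ancestors a b v, w ∈ S ↔ w ∈ T) :
    v ∈ oddRunSet a b S ↔ v ∈ oddRunSet a b T := by
  simp only [oddRunSet, Finset.mem_filter, h v (self_mem_ancestors v), runLen_congr h]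

/-- `v` is determined by `u` and the exponents `i, j ≤ log₂ n` of a common ancestor. -/
lemma card_not_disjoint_ancestorCoords_le (ha : 0 < a) (hab : a < b) (hco : a.Coprime b)
    {n u : ℕ} (hu : 0 < u) (hun : u ≤ n) :
    #{v ∈ Icc 1 n | ¬ Disjoint (ancestorCoords a b n u) (ancestorCoords a b n v)}
      ≤ (Nat.log 2 n + 1) ^ 2 := by
  have hb : 0 < b := by omega
  set R := range (Nat.log 2 n + 1)
  calc _ ≤ #((R ×ˢ R).image fun (i, j) => u * a ^ i * b ^ j / (a ^ j * b ^ i)) := by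
        refine Finset.card_le_card fun v hv => ?_
        simp only [ancestorCoords, Finset.mem_filter, Finset.mem_Icc, Finset.not_disjoint_iff,
          Finset.mem_univ, true_and] at hv
        obtain ⟨⟨hv, hvn⟩, w, ⟨i, hi⟩, ⟨j, hj⟩⟩ := hv
        have hR {x y j : ℕ} (hx : 0 < x) (hxn : x ≤ n) (hj : y * b ^ j = x * a ^ j) : j ∈ R :=
          Finset.mem_range_succ_iff.mpr (le_natLog_two_of_mul_pow_eq ha hab hco hx hxn hj)
        refine Finset.mem_image.mpr
          ⟨(i, j), Finset.mem_product.mpr ⟨hR hu hun hi, hR hv hvn hj⟩, ?_⟩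
        refine Nat.div_eq_of_eq_mul_left (by positivity) ?_
        calc u * a ^ i * b ^ j = (w + 1) * b ^ i * b ^ j := by rw [hi]
          _ = v * (a ^ j * b ^ i) := by rw [mul_right_comm, hj]; ring
    _ ≤ #(R ×ˢ R) := Finset.card_image_le
    _ = (Nat.log 2 n + 1) ^ 2 := by rw [Finset.card_product, Finset.card_range, sq]

end Ancestors

noncomputable def oddRunProb (a b : ℕ) (p : ℝ) (v : ℕ) : ℝ :=
  if h : b ∣ v ∧ a * (v / b) < v then p * (1 - oddRunProb a b p (a * (v / b))) else p
termination_by v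
decreasing_by exact h.2

section OddRunProb

variable {a b : ℕ} {p : ℝ}

lemma oddRunProb_of_dvd (hab : a < b) {v : ℕ} (hv : 0 < v) (hd : b ∣ v) :
    oddRunProb a b p v = p * (1 - oddRunProb a b p (a * (v / b))) := by
  rw [oddRunProb, dif_pos ⟨hd, parent_lt hab hv hd⟩]

lemma oddRunProb_of_not_dvd {v : ℕ} (hd : ¬ b ∣ v) : oddRunProb a b p v = p := by
  rw [oddRunProb, dif_neg (by tauto)]

lemma oddRunProb_mul_of_coprime (hab : a < b) {c : ℕ} (hc : 0 < c) (hcb : c.Coprime b)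
    (v : ℕ) : oddRunProb a b p (c * v) = oddRunProb a b p v := by
  induction v using Nat.strong_induction_on with
  | _ v ih =>
    rcases Nat.eq_zero_or_pos v with rfl | hv
    · rw [mul_zero]
    by_cases hd : b ∣ v
    · rw [oddRunProb_of_dvd hab (Nat.mul_pos hc hv) (Dvd.dvd.mul_left hd c),
        oddRunProb_of_dvd hab hv hd, Nat.mul_div_assoc c hd, mul_left_comm,
        ih _ (parent_lt hab hv hd)]
    · rw [oddRunProb_of_not_dvd hd,
        oddRunProb_of_not_dvd fun h => hd (hcb.symm.dvd_of_dvd_mul_left h)]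

lemma sum_oddRunProb_Icc (ha : 0 < a) (hab : a < b) (hco : a.Coprime b) (m : ℕ) :
    ∑ v ∈ Icc 1 m, oddRunProb a b p v
      = p * m - p * ∑ v ∈ Icc 1 (m / b), oddRunProb a b p v := by
  have hb : 0 < b := by omega
  have hterm : ∀ v ∈ Icc 1 m, oddRunProb a b p v
      = p - if b ∣ v then p * oddRunProb a b p (a * (v / b)) else 0 := by
    intro v hv
    split_ifs with hd
    · rw [oddRunProb_of_dvd hab (Finset.mem_Icc.mp hv).1 hd]; ring
    · rw [oddRunProb_of_not_dvd hd, sub_zero]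
  rw [Finset.sum_congr rfl hterm, Finset.sum_sub_distrib, Finset.sum_const, Nat.card_Icc,
    ← Finset.sum_filter, sum_Icc_filter_dvd _ hb, Finset.mul_sum, nsmul_eq_mul,
    Nat.add_sub_cancel, mul_comm (m : ℝ)]
  simp only [Nat.mul_div_cancel_left _ hb, oddRunProb_mul_of_coprime hab ha hco]

/-- Writing `m = b * m' + r`, `sum_oddRunProb_Icc` turns an error `E` at `m'` into the error
`p² r / (b + p) - p E` at `m`, and `p² + p · p / (1 - p) ≤ p / (1 - p)`. -/
theorem abs_sum_oddRunProb_sub_le (ha : 0 < a) (hab : a < b) (hco : a.Coprime b)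
    (hp0 : 0 ≤ p) (hp1 : p < 1) (m : ℕ) :
    |∑ v ∈ Icc 1 m, oddRunProb a b p v - b / (b + p) * p * m| ≤ p / (1 - p) := by
  induction m using Nat.strong_induction_on with
  | _ m ih =>
    rcases Nat.eq_zero_or_pos m with rfl | hm
    · simp only [Finset.Icc_eq_empty_of_lt zero_lt_one, Finset.sum_empty, CharP.cast_eq_zero,
        mul_zero, sub_zero, abs_zero]
      exact div_nonneg hp0 (by linarith)
    have hb : 0 < b := by omega
    have hbp : (0 : ℝ) < b + p := by positivity
    set E := ∑ v ∈ Icc 1 (m / b), oddRunProb a b p v - b / (b + p) * p * ↑(m / b) with hE_def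
    have hE : |E| ≤ p / (1 - p) := ih _ (Nat.div_lt_self hm (by omega))
    have hm_eq : (m : ℝ) = b * ↑(m / b) + ↑(m % b) := by
      exact_mod_cast (Nat.div_add_mod m b).symm
    have hr : (↑(m % b) : ℝ) / (b + p) ≤ 1 := by
      rw [div_le_one hbp]
      linarith [show (↑(m % b) : ℝ) < b by exact_mod_cast Nat.mod_lt m hb]
    have hstep : ∑ v ∈ Icc 1 m, oddRunProb a b p v - b / (b + p) * p * m
        = p ^ 2 * (↑(m % b) / (b + p)) - p * E := by
      rw [sum_oddRunProb_Icc ha hab hco, hm_eq, hE_def]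
      field_simp
      ring
    rw [hstep]
    calc |p ^ 2 * (↑(m % b) / (b + p)) - p * E|
        ≤ p ^ 2 * (↑(m % b) / (b + p)) + p * |E| := by
          refine (abs_sub _ _).trans_eq ?_
          rw [abs_of_nonneg (by positivity), abs_mul, abs_of_nonneg hp0]
      _ ≤ p ^ 2 * 1 + p * (p / (1 - p)) := by gcongr
      _ ≤ p / (1 - p) := by
          rw [← sub_nonneg]
          have h1p : 1 - p ≠ 0 := by linarith
          have : p / (1 - p) - (p ^ 2 * 1 + p * (p / (1 - p))) = p * (1 - p) := by
            field_simp
            ring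
          rw [this]
          exact mul_nonneg hp0 (by linarith)

end OddRunProb

noncomputable def oddRunIndicator (a b n v : ℕ) (ω : Fin n → Bool) : ℝ :=
  if v ∈ oddRunSet a b (randSet n ω) then 1 else 0

section RandomSet

variable {n : ℕ} {p : ℝ}

lemma isProbabilityMeasure_bern (hp0 : 0 ≤ p) (hp1 : p ≤ 1) : IsProbabilityMeasure (bern p) :=
  ⟨by simp [bern, ← ENNReal.ofReal_add hp0 (sub_nonneg.mpr hp1)]⟩

lemma isProbabilityMeasure_randMeasure (n : ℕ) (hp0 : 0 ≤ p) (hp1 : p ≤ 1) :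
    IsProbabilityMeasure (randMeasure n p) := by
  have := isProbabilityMeasure_bern hp0 hp1
  unfold randMeasure
  infer_instance

lemma integral_coord_eq_true (hp0 : 0 ≤ p) (hp1 : p ≤ 1) (i : Fin n) :
    ∫ ω, (if ω i = true then 1 else 0 : ℝ) ∂randMeasure n p = p := by
  have := isProbabilityMeasure_bern hp0 hp1
  have hind : (fun ω : Fin n → Bool => if ω i = true then (1 : ℝ) else 0)
      = (Function.eval i ⁻¹' ({true} : Set Bool)).indicator 1 := by
    funext ω
    simp [Set.indicator_apply]
  rw [hind, integral_indicator_one (measurable_pi_apply i (measurableSet_singleton true)),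
    Measure.real, randMeasure, (measurePreserving_eval _ i).measure_preimage
      (measurableSet_singleton true).nullMeasurableSet]
  simp [bern, hp0]

lemma mem_randSet_iff {m : ℕ} {ω : Fin n → Bool} :
    m ∈ randSet n ω ↔ ∃ i : Fin n, ω i = true ∧ (i : ℕ) + 1 = m := by
  simp [randSet]

lemma randSet_subset_Icc (ω : Fin n → Bool) : randSet n ω ⊆ Icc 1 n := by
  intro m hm
  obtain ⟨i, -, rfl⟩ := mem_randSet_iff.mp hm
  exact Finset.mem_Icc.mpr ⟨by omega, i.isLt⟩

lemma mem_randSet_iff_coord {v : ℕ} (hv : 0 < v) (hvn : v ≤ n) {ω : Fin n → Bool} :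
    v ∈ randSet n ω ↔ ω ⟨v - 1, by omega⟩ = true := by
  rw [mem_randSet_iff]
  constructor
  · rintro ⟨i, hi, rfl⟩
    simpa using hi
  · exact fun h => ⟨_, h, by simp; omega⟩

variable {a b : ℕ}

lemma dependsOn_oddRunIndicator (v : ℕ) :
    DependsOn (oddRunIndicator a b n v) (ancestorCoords a b n v) := by
  intro ω ω' h
  have hS : ∀ w ∈ ancestors a b v, w ∈ randSet n ω ↔ w ∈ randSet n ω' := by
    intro w hw
    simp only [mem_randSet_iff]
    refine exists_congr fun i => and_congr_left fun hi => ?_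
    rw [h i (by simp [ancestorCoords, hi, hw])]
  simp only [oddRunIndicator, mem_oddRunSet_congr hS]

lemma oddRunIndicator_nonneg (v : ℕ) (ω : Fin n → Bool) :
    0 ≤ oddRunIndicator a b n v ω := by
  unfold oddRunIndicator; split_ifs <;> norm_num

lemma oddRunIndicator_le_one (v : ℕ) (ω : Fin n → Bool) :
    oddRunIndicator a b n v ω ≤ 1 := by
  unfold oddRunIndicator; split_ifs <;> norm_num

lemma maxMulFree_randSet_eq_sum (hab : a < b) (hco : a.Coprime b) (ω : Fin n → Bool) :
    (maxMulFree a b (randSet n ω) : ℝ) = ∑ v ∈ Icc 1 n, oddRunIndicator a b n v ω := by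
  have hpos (v) (hv : v ∈ randSet n ω) : 0 < v :=
    (Finset.mem_Icc.mp (randSet_subset_Icc ω hv)).1
  rw [maxMulFree_eq_card_oddRunSet hab hco hpos]
  simp only [oddRunIndicator]
  rw [Finset.sum_boole, Finset.filter_mem_eq_inter,
    Finset.inter_eq_right.mpr ((oddRunSet_subset a b _).trans (randSet_subset_Icc ω))]

/-- The indicator of the parent only sees coordinates below `v`, so it is independent of
whether `v` is sampled. -/
theorem integral_oddRunIndicator (ha : 0 < a) (hab : a < b) (hp0 : 0 ≤ p) (hp1 : p ≤ 1)
    {v : ℕ} (hv : 0 < v) (hvn : v ≤ n) :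
    ∫ ω, oddRunIndicator a b n v ω ∂randMeasure n p = oddRunProb a b p v := by
  have := isProbabilityMeasure_bern hp0 hp1
  have := isProbabilityMeasure_randMeasure n hp0 hp1
  induction v using Nat.strong_induction_on with
  | _ v ih =>
    set i : Fin n := ⟨v - 1, by omega⟩
    have hcoord (ω : Fin n → Bool) : v ∈ randSet n ω ↔ ω i = true :=
      mem_randSet_iff_coord hv hvn
    by_cases hd : b ∣ v
    · set u := a * (v / b) with hu_def
      have hu : 0 < u := parent_pos ha hv hd
      have huv : u < v := parent_lt hab hv hd
      have hmul : oddRunIndicator a b n v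
          = fun ω => (if ω i = true then 1 else 0) * (1 - oddRunIndicator a b n u ω) := by
        funext ω
        simp only [oddRunIndicator, mem_oddRunSet_iff hab hv, hcoord, hd, true_and, ← hu_def]
        by_cases h1 : ω i = true <;> by_cases h2 : u ∈ oddRunSet a b (randSet n ω) <;>
          simp [h1, h2]
      have hi : i ∉ ancestorCoords a b n u := fun h => by
        have := le_of_mem_ancestors hab (Finset.mem_filter.mp h).2
        simp only [i] at this
        omega
      have hindep : IndepFun (fun ω : Fin n → Bool => if ω i = true then (1 : ℝ) else 0)
          (fun ω => 1 - oddRunIndicator a b n u ω) (randMeasure n p) :=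
        DependsOn.indepFun_pi (s := {i}) (t := ancestorCoords a b n u)
          (fun ω ω' h => by rw [h i (by simp)])
          (fun ω ω' h => by rw [dependsOn_oddRunIndicator u h])
          (Finset.disjoint_singleton_left.mpr hi)
      rw [hmul, hindep.integral_fun_mul_eq_mul_integral .of_discrete .of_discrete,
        integral_coord_eq_true hp0 hp1, integral_sub .of_finite .of_finite, integral_const,
        ih u huv hu (by omega), oddRunProb_of_dvd hab hv hd]
      simp [u]
    · have hcoord' : oddRunIndicator a b n v = fun ω => if ω i = true then 1 else 0 := by
        funext ω
        simp [oddRunIndicator, mem_oddRunSet_iff hab hv, hcoord, hd]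
      rw [hcoord', integral_coord_eq_true hp0 hp1, oddRunProb_of_not_dvd hd]

end RandomSet

section Moments

variable {a b n : ℕ} {p : ℝ}

lemma covariance_oddRunIndicator_le (hp0 : 0 ≤ p) (hp1 : p ≤ 1) (u v : ℕ) :
    cov[oddRunIndicator a b n u, oddRunIndicator a b n v; randMeasure n p]
      ≤ if Disjoint (ancestorCoords a b n u) (ancestorCoords a b n v) then 0 else 1 := by
  have := isProbabilityMeasure_bern hp0 hp1
  have := isProbabilityMeasure_randMeasure n hp0 hp1
  split_ifs with h
  · exact ((dependsOn_oddRunIndicator u).indepFun_pi (dependsOn_oddRunIndicator v)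
      h).covariance_eq_zero .of_discrete .of_discrete |>.le
  · rw [covariance_eq_sub .of_discrete .of_discrete]
    have hprod :
        ∫ ω, (oddRunIndicator a b n u * oddRunIndicator a b n v) ω ∂randMeasure n p ≤ 1 :=
      (integral_mono .of_finite (integrable_const 1) fun ω =>
        mul_le_one₀ (oddRunIndicator_le_one u ω) (oddRunIndicator_nonneg v ω)
          (oddRunIndicator_le_one v ω)).trans_eq (by simp)
    have hmean : 0 ≤ (∫ ω, oddRunIndicator a b n u ω ∂randMeasure n p)
        * ∫ ω, oddRunIndicator a b n v ω ∂randMeasure n p :=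
      mul_nonneg (integral_nonneg (oddRunIndicator_nonneg u))
        (integral_nonneg (oddRunIndicator_nonneg v))
    linarith

theorem variance_maxMulFree_le (ha : 0 < a) (hab : a < b) (hco : a.Coprime b)
    (hp0 : 0 ≤ p) (hp1 : p ≤ 1) :
    Var[fun ω => (maxMulFree a b (randSet n ω) : ℝ); randMeasure n p]
      ≤ n * (Nat.log 2 n + 1) ^ 2 := by
  have := isProbabilityMeasure_randMeasure n hp0 hp1
  simp_rw [maxMulFree_randSet_eq_sum hab hco]
  rw [variance_fun_sum' fun v _ => .of_discrete]
  calc _ ≤ ∑ _u ∈ Icc 1 n, ((Nat.log 2 n + 1) ^ 2 : ℝ) := Finset.sum_le_sum fun u hu => ?_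
    _ = n * (Nat.log 2 n + 1) ^ 2 := by simp
  have hu := Finset.mem_Icc.mp hu
  calc _ ≤ ∑ v ∈ Icc 1 n,
        if ¬ Disjoint (ancestorCoords a b n u) (ancestorCoords a b n v) then (1 : ℝ) else 0 :=
        Finset.sum_le_sum fun v _ => by
          simpa [ite_not] using covariance_oddRunIndicator_le hp0 hp1 u v
    _ ≤ ((Nat.log 2 n + 1) ^ 2 : ℝ) := by
        rw [Finset.sum_boole]
        exact_mod_cast card_not_disjoint_ancestorCoords_le ha hab hco hu.1 hu.2

theorem abs_integral_maxMulFree_sub_le (ha : 0 < a) (hab : a < b) (hco : a.Coprime b)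
    (hp0 : 0 ≤ p) (hp1 : p < 1) :
    |∫ ω, (maxMulFree a b (randSet n ω) : ℝ) ∂randMeasure n p - b / (b + p) * p * n|
      ≤ p / (1 - p) := by
  have := isProbabilityMeasure_randMeasure n hp0 hp1.le
  simp_rw [maxMulFree_randSet_eq_sum hab hco]
  rw [integral_finsetSum _ fun v _ => .of_finite, Finset.sum_congr rfl fun v hv =>
    integral_oddRunIndicator ha hab hp0 hp1.le (Finset.mem_Icc.mp hv).1 (Finset.mem_Icc.mp hv).2]
  exact abs_sum_oddRunProb_sub_le ha hab hco hp0 hp1 n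

/-- The variance is at most `9 n log² n` while the squared threshold is
`p n log² n (log log n)²`. -/
lemma tendsto_variance_maxMulFree_div_sq (ha : 0 < a) (hab : a < b) (hco : a.Coprime b)
    (hp0 : 0 < p) (hp1 : p ≤ 1) :
    Tendsto (fun n : ℕ => Var[fun ω => (maxMulFree a b (randSet n ω) : ℝ); randMeasure n p]
      / (√(p * n) * Real.log n * Real.log (Real.log n)) ^ 2) atTop (𝓝 0) := by
  have hlog := Real.tendsto_log_atTop.comp (tendsto_natCast_atTop_atTop (R := ℝ))
  have hloglog := Real.tendsto_log_atTop.comp hlog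
  have hbound :
      Tendsto (fun n : ℕ => 9 / p * (Real.log (Real.log n) ^ 2)⁻¹) atTop (𝓝 0) := by
    simpa using ((tendsto_pow_atTop two_ne_zero).comp hloglog).inv_tendsto_atTop.const_mul (9 / p)
  refine tendsto_of_tendsto_of_tendsto_of_le_of_le' tendsto_const_nhds hbound
    (Eventually.of_forall fun n => div_nonneg (variance_nonneg _ _) (sq_nonneg _)) ?_
  filter_upwards [hlog.eventually_ge_atTop 1, hloglog.eventually_ge_atTop 1] with n h1 h2
  simp only [Function.comp_apply] at h1 h2
  have hn : (0 : ℝ) < n := by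
    rcases Nat.eq_zero_or_pos n with rfl | hn
    · norm_num at h1
    · exact_mod_cast hn
  have hT : (√(p * n) * Real.log n * Real.log (Real.log n)) ^ 2
      = p * n * Real.log n ^ 2 * Real.log (Real.log n) ^ 2 := by
    rw [mul_pow, mul_pow, Real.sq_sqrt (by positivity)]
  calc _ ≤ n * (3 * Real.log n) ^ 2 / (√(p * n) * Real.log n * Real.log (Real.log n)) ^ 2 := by
        gcongr
        refine (variance_maxMulFree_le ha hab hco hp0.le hp1).trans ?_
        gcongr
        exact natLog_two_add_one_le h1
    _ = 9 / p * (Real.log (Real.log n) ^ 2)⁻¹ := by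
        rw [hT]
        field_simp
        ring

end Moments

/-- With high probability, the maximum size of a `(b/a)`-multiple-free subset of the
random set `[n]_p` equals `(b/(b+p))·p·n + O(√(pn)·log n·log log n)`. -/
theorem stmt10 (a b : ℕ) (ha : 0 < a) (hab : a < b) (hco : Nat.Coprime a b)
    (p : ℝ) (hp0 : 0 < p) (hp1 : p < 1) :
    ∃ C : ℝ, 0 < C ∧
      Filter.Tendsto (fun n : ℕ => randMeasure n p {ω |
          |(maxMulFree a b (randSet n ω) : ℝ) - ((b : ℝ) / (b + p)) * p * n|
            ≤ C * Real.sqrt (p * n) * Real.log n * Real.log (Real.log n)})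
        Filter.atTop (nhds 1) := by
  have := fun n => isProbabilityMeasure_randMeasure n hp0.le hp1.le
  refine ⟨1, one_pos, ?_⟩
  simp only [one_mul]
  exact tendsto_measure_abs_sub_le_of_variance (fun _ => .of_discrete)
    (fun n => abs_integral_maxMulFree_sub_le ha hab hco hp0.le hp1)
    (tendsto_sqrt_mul_log_mul_log_log hp0)
    (tendsto_variance_maxMulFree_div_sq ha hab hco hp0 hp1.le)
end

section
/- Suppose D is the digraph on [n] with arcs (x,y) when bx = ay for coprime a < b. If (x,y) is an arc of D, then x is divisible by a; moreover, if x is an i-th subpower of b then y = (b/a)x is an (i+1)-th subpower of b. Consequently, along any directed path v_0 → v_1 → ... → v_l in D starting at a source v_0 that is a 0-th subpower of b, the vertex v_j is a j-th subpower of b for every j. -/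
/-- The arc relation of the digraph `D` on `[n]`: an arc `(x,y)` whenever `b*x = a*y`. -/
def arcD (n a b x y : ℕ) : Prop :=
  x ∈ Finset.Icc 1 n ∧ y ∈ Finset.Icc 1 n ∧ b * x = a * y

/-- If `(x,y)` is an arc of `D` then `a ∣ x`; if moreover `x` is an `i`-th subpower of
`b` then `y` is an `(i+1)`-th subpower of `b`. Consequently, along a directed path
`v_0 → v_1 → ⋯ → v_l` in `D` whose source `v_0` is a `0`-th subpower of `b`, the
vertex `v_j` is a `j`-th subpower of `b` for every `j`. -/
theorem stmt18 (n a b : ℕ) (ha : 0 < a) (hab : a < b) (hco : Nat.Coprime a b) :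
    (∀ x y : ℕ, arcD n a b x y → a ∣ x) ∧
    (∀ x y i : ℕ, arcD n a b x y → isSubpower b i x → isSubpower b (i + 1) y) ∧
    (∀ (l : ℕ) (v : Fin (l + 1) → ℕ),
      (∀ j : Fin l, arcD n a b (v j.castSucc) (v j.succ)) →
      isSubpower b 0 (v 0) → ∀ j : Fin (l + 1), isSubpower b (j : ℕ) (v j)) := by
  have hdvd : ∀ x y : ℕ, arcD n a b x y → a ∣ x := by
    intro x y ⟨_, _, h⟩
    have : a ∣ b * x := ⟨y, h⟩
    exact (Nat.Coprime.dvd_of_dvd_mul_left hco this)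
  have hstep : ∀ x y i : ℕ, arcD n a b x y → isSubpower b i x → isSubpower b (i + 1) y := by
    intro x y i harc hsub
    obtain ⟨l, hx, hl⟩ := hsub
    have hax : a ∣ x := hdvd x y harc
    obtain ⟨_, _, h⟩ := harc
    have hal : a ∣ l := by
      rw [hx] at hax
      exact (hco.pow_right i).dvd_of_dvd_mul_left hax
    obtain ⟨m, hm⟩ := hal
    refine ⟨m, ?_, ?_⟩
    · have : a * y = a * (b ^ (i + 1) * m) := by
        rw [← h, hx, hm]; ring
      exact Nat.eq_of_mul_eq_mul_left ha this
    · intro hbm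
      exact hl (hm ▸ Dvd.dvd.mul_left hbm a)
  refine ⟨hdvd, hstep, ?_⟩
  intro l v hpath h0 j
  induction j using Fin.induction with
  | zero => exact h0
  | succ k ih => exact hstep _ _ _ (hpath k) ih
end
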